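/- arXiv:1411.5035 — 2 statements merged into one kernel-verified Lean document; each statement's English description precedes it below -/
import Mathlib

section
/- Rank relation for free Cantor_n algebras (used for equation (n_product_iso) and Theorem 1.4): let n ≥ 2 and let C be a Cantor_n algebra that is free on the single generator c. Then C is also free on the n generators given by the components of μ⁻¹(c), i.e. on the family (μ⁻¹ c) : Fin n → C. -/
open CategoryTheory


/-- A Cantor_n algebra: a type with a bijection `μ : (Fin n → X) ≃ X`. -/
structure CantorNStr (n : ℕ) (X : Type) where
  mu : (Fin n → X) ≃ X

/-- A homomorphism of Cantor_n algebras. -/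
def IsCantorNHom {n : ℕ} {C X : Type} (hC : CantorNStr n C) (hX : CantorNStr n X)
    (f : C → X) : Prop :=
  ∀ x : Fin n → C, f (hC.mu x) = hX.mu (f ∘ x)

/-- `C` is the free Cantor_n algebra on the generators `b : Fin r → C`. -/
def IsFreeCantorNOn {n : ℕ} {C : Type} (hC : CantorNStr n C) {r : ℕ} (b : Fin r → C) : Prop :=
  ∀ (X : Type) (hX : CantorNStr n X) (x : Fin r → X),
    ∃! f : C → X, IsCantorNHom hC hX f ∧ ∀ i, f (b i) = x i

/- A homomorphism sends `c` to `μ x` exactly when it sends the components of `μ⁻¹ c` to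
those of `x`, so the two universal properties quantify over the same homomorphisms. -/

theorem IsCantorNHom.apply_eq_mu_iff {n : ℕ} {C X : Type} {hC : CantorNStr n C}
    {hX : CantorNStr n X} {f : C → X} (hf : IsCantorNHom hC hX f) (c : C) (x : Fin n → X) :
    f c = hX.mu x ↔ ∀ i, f (hC.mu.symm c i) = x i := by
  have hfc : f c = hX.mu (f ∘ hC.mu.symm c) := by
    simpa only [Equiv.apply_symm_apply] using hf (hC.mu.symm c)
  rw [hfc, hX.mu.apply_eq_iff_eq, funext_iff]
  rfl

theorem free_on_n_generators_general {n : ℕ} {C : Type} (hC : CantorNStr n C)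
    (c : C) (hfree : IsFreeCantorNOn hC ![c]) :
    IsFreeCantorNOn hC (hC.mu.symm c) := by
  intro X hX x
  refine existsUnique_congr (fun f => ?_) |>.mp (hfree X hX ![hX.mu x])
  simp only [Fin.forall_fin_one, Matrix.cons_val_fin_one]
  exact and_congr_right fun hf => hf.apply_eq_mu_iff c x

/-- **Rank relation for free Cantor_n algebras**: for `n ≥ 2`, if `C` is free on the
single generator `c`, then `C` is also free on the `n` generators given by the components
of `μ⁻¹(c)`. -/
theorem free_on_n_generators {n : ℕ} (hn : 2 ≤ n) {C : Type} (hC : CantorNStr n C)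
    (c : C) (hfree : IsFreeCantorNOn hC ![c]) :
    IsFreeCantorNOn hC (hC.mu.symm c) :=
  free_on_n_generators_general hC c hfree
end

section
/- Cloning (used in the proofs of Propositions 5.4 and 5.5): let C be a Cantor algebra free on one generator and let Z be a clone of C. Then there exist two clones Z₁ and Z₂ of C with Z₁ ⊆ Z, Z₂ ⊆ Z, Z₁ ∩ Z₂ = ∅, and such that Z equals the subalgebra generated by Z₁ ∪ Z₂. -/
open CategoryTheory


/-- A Cantor algebra: a type with a bijection `μ : X × X ≃ X`. -/
structure CantorStr (X : Type) where
  mu : X × X ≃ X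

/-- A homomorphism of Cantor algebras: a map commuting with the multiplications. -/
def IsCantorHom {C X : Type} (hC : CantorStr C) (hX : CantorStr X) (f : C → X) : Prop :=
  ∀ x y : C, f (hC.mu (x, y)) = hX.mu (f x, f y)

/-- `C` is the free Cantor algebra on the generators `b : Fin r → C`. -/
def IsFreeCantorOn {C : Type} (hC : CantorStr C) {r : ℕ} (b : Fin r → C) : Prop :=
  ∀ (X : Type) (hX : CantorStr X) (x : Fin r → X),
    ∃! f : C → X, IsCantorHom hC hX f ∧ ∀ i, f (b i) = x i

/-- A subalgebra: a subset closed under `μ`, `λ` and `ρ`. -/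
def IsCantorSubalgebra {C : Type} (hC : CantorStr C) (S : Set C) : Prop :=
  (∀ x ∈ S, ∀ y ∈ S, hC.mu (x, y) ∈ S) ∧
    ∀ x ∈ S, (hC.mu.symm x).1 ∈ S ∧ (hC.mu.symm x).2 ∈ S

/-- The subalgebra generated by a subset: the smallest subalgebra containing it. -/
def genCantorSubalgebra {C : Type} (hC : CantorStr C) (A : Set C) : Set C :=
  ⋂₀ {S : Set C | IsCantorSubalgebra hC S ∧ A ⊆ S}

/-- A clone: a nonempty, proper, finitely generated subalgebra. -/
def IsClone {C : Type} (hC : CantorStr C) (X : Set C) : Prop :=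
  IsCantorSubalgebra hC X ∧ X.Nonempty ∧ X ≠ Set.univ ∧
    ∃ F : Set C, F.Finite ∧ X = genCantorSubalgebra hC F

/-!
In the free Cantor algebra on `c` every element has a unique normal form: a `μ`-tree whose
leaves are words in `λ, ρ` applied to `c`, with no node whose children are `λ w` and `ρ w`.
An element lies in a subalgebra iff all its leaves do, and the leaf words of a subalgebra are
closed under passing to children and under merging siblings. If a clone is generated by
elements whose leaf words form the finite set `W`, pick a shortest `v ∈ W`. The words of `W`
that do not extend `v`, together with `λ v`, generate one clone, and `ρ v` generates the other.
Their leaf words lie in two disjoint closed sets of words, so the clones are disjoint; together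
they contain `v = μ (λ v, ρ v)`, hence all of `W`, hence the whole clone.
-/

namespace CantorStr

variable {C : Type} (hC : CantorStr C)

/-- The left (`false`) or right (`true`) component `λ x`, `ρ x`. -/
def child (b : Bool) (x : C) : C :=
  bif b then (hC.mu.symm x).2 else (hC.mu.symm x).1

@[simp] lemma child_false (x : C) : hC.child false x = (hC.mu.symm x).1 := rfl

@[simp] lemma child_true (x : C) : hC.child true x = (hC.mu.symm x).2 := rfl

lemma mu_child (x : C) : hC.mu (hC.child false x, hC.child true x) = x :=
  hC.mu.apply_symm_apply x

@[simp] lemma child_mu (x y : C) (b : Bool) : hC.child b (hC.mu (x, y)) = bif b then y else x := by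
  cases b <;> simp

end CantorStr

section Hom

variable {A C X : Type} {hA : CantorStr A} {hC : CantorStr C} {hX : CantorStr X}

lemma IsCantorHom.id : IsCantorHom hC hC id := fun _ _ => rfl

lemma IsCantorHom.comp {g : C → X} {f : A → C} (hg : IsCantorHom hC hX g)
    (hf : IsCantorHom hA hC f) : IsCantorHom hA hX (g ∘ f) := by
  intro x y
  simp only [Function.comp_apply]
  rw [hf, hg]

lemma IsCantorHom.map_child {f : C → X} (hf : IsCantorHom hC hX f) (b : Bool) (x : C) :
    f (hC.child b x) = hX.child b (f x) := by
  have h : hX.mu.symm (f x) = (f (hC.child false x), f (hC.child true x)) := by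
    rw [Equiv.symm_apply_eq, ← hf, hC.mu_child]
  cases b <;> simp [h]

lemma IsCantorHom.symm {e : C ≃ X} (he : IsCantorHom hC hX e) : IsCantorHom hX hC e.symm := by
  intro x y
  rw [Equiv.symm_apply_eq, he, e.apply_symm_apply, e.apply_symm_apply]

lemma IsFreeCantorOn.exists_equiv {r : ℕ} {b : Fin r → C} {b' : Fin r → X}
    (hb : IsFreeCantorOn hC b) (hb' : IsFreeCantorOn hX b') :
    ∃ e : C ≃ X, IsCantorHom hC hX e := by
  obtain ⟨f, ⟨hf, hfb⟩, -⟩ := hb X hX b'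
  obtain ⟨g, ⟨hg, hgb⟩, -⟩ := hb' C hC b
  have hgf : g ∘ f = id :=
    (hb C hC b).unique ⟨hg.comp hf, fun i => by simp [hfb, hgb]⟩ ⟨IsCantorHom.id, fun _ => rfl⟩
  have hfg : f ∘ g = id :=
    (hb' X hX b').unique ⟨hf.comp hg, fun i => by simp [hfb, hgb]⟩ ⟨IsCantorHom.id, fun _ => rfl⟩
  exact ⟨⟨f, g, congrFun hgf, congrFun hfg⟩, hf⟩

end Hom

namespace IsCantorSubalgebra

variable {C X : Type} {hC : CantorStr C} {hX : CantorStr X} {S : Set C}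

lemma of_child (hmu : ∀ x ∈ S, ∀ y ∈ S, hC.mu (x, y) ∈ S)
    (hchild : ∀ x ∈ S, ∀ b, hC.child b x ∈ S) : IsCantorSubalgebra hC S :=
  ⟨hmu, fun x hx => ⟨hchild x hx false, hchild x hx true⟩⟩

lemma mu_mem (hS : IsCantorSubalgebra hC S) {x y : C} (hx : x ∈ S) (hy : y ∈ S) :
    hC.mu (x, y) ∈ S :=
  hS.1 x hx y hy

lemma child_mem (hS : IsCantorSubalgebra hC S) (b : Bool) {x : C} (hx : x ∈ S) :
    hC.child b x ∈ S := by
  cases b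
  exacts [(hS.2 x hx).1, (hS.2 x hx).2]

lemma mu_mem_iff (hS : IsCantorSubalgebra hC S) {x y : C} :
    hC.mu (x, y) ∈ S ↔ x ∈ S ∧ y ∈ S :=
  ⟨fun h => ⟨by simpa using hS.child_mem false h, by simpa using hS.child_mem true h⟩,
    fun h => hS.mu_mem h.1 h.2⟩

lemma preimage {T : Set X} (hT : IsCantorSubalgebra hX T) {f : C → X}
    (hf : IsCantorHom hC hX f) : IsCantorSubalgebra hC (f ⁻¹' T) :=
  of_child (fun x hx y hy => by rw [Set.mem_preimage, hf]; exact hT.mu_mem hx hy)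
    (fun x hx b => by rw [Set.mem_preimage, hf.map_child]; exact hT.child_mem b hx)

end IsCantorSubalgebra

section Generated

variable {C X : Type} {hC : CantorStr C} {hX : CantorStr X}

lemma subset_genCantorSubalgebra (A : Set C) : A ⊆ genCantorSubalgebra hC A :=
  fun _ hx => Set.mem_sInter.2 fun _ hS => hS.2 hx

lemma genCantorSubalgebra_subset {A S : Set C} (hS : IsCantorSubalgebra hC S) (hAS : A ⊆ S) :
    genCantorSubalgebra hC A ⊆ S :=
  Set.sInter_subset_of_mem ⟨hS, hAS⟩

lemma isCantorSubalgebra_genCantorSubalgebra (A : Set C) :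
    IsCantorSubalgebra hC (genCantorSubalgebra hC A) := by
  refine ⟨fun x hx y hy => ?_, fun x hx => ⟨?_, ?_⟩⟩ <;>
    refine Set.mem_sInter.2 fun S hS => ?_
  · exact hS.1.mu_mem (Set.mem_sInter.1 hx S hS) (Set.mem_sInter.1 hy S hS)
  · exact (hS.1.2 x (Set.mem_sInter.1 hx S hS)).1
  · exact (hS.1.2 x (Set.mem_sInter.1 hx S hS)).2

lemma genCantorSubalgebra_empty : genCantorSubalgebra hC ∅ = ∅ :=
  Set.subset_empty_iff.1 <|
    genCantorSubalgebra_subset ⟨fun _ h => h.elim, fun _ h => h.elim⟩ le_rfl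

lemma genCantorSubalgebra_preimage {e : C ≃ X} (he : IsCantorHom hC hX e) (A : Set X) :
    genCantorSubalgebra hC (e ⁻¹' A) = e ⁻¹' genCantorSubalgebra hX A := by
  refine (genCantorSubalgebra_subset
    ((isCantorSubalgebra_genCantorSubalgebra A).preimage he)
    (Set.preimage_mono (subset_genCantorSubalgebra A))).antisymm ?_
  intro x hx
  have hsub : A ⊆ e.symm ⁻¹' genCantorSubalgebra hC (e ⁻¹' A) := fun a ha =>
    subset_genCantorSubalgebra _ (by simpa using ha)
  simpa using genCantorSubalgebra_subset
    ((isCantorSubalgebra_genCantorSubalgebra _).preimage he.symm) hsub hx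

end Generated

section Cloning

variable {C X : Type} {hC : CantorStr C} {hX : CantorStr X}

lemma IsClone.preimage {e : C ≃ X} (he : IsCantorHom hC hX e) {Z : Set X} (hZ : IsClone hX Z) :
    IsClone hC (e ⁻¹' Z) := by
  obtain ⟨hsub, ⟨z, hz⟩, hne, F, hF, rfl⟩ := hZ
  refine ⟨hsub.preimage he, ⟨e.symm z, by simpa using hz⟩, fun h => hne ?_, e ⁻¹' F,
    hF.preimage e.injective.injOn, (genCantorSubalgebra_preimage he F).symm⟩
  rw [← e.image_preimage (genCantorSubalgebra hX F), h, Set.image_univ, e.range_eq_univ]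

lemma isClone_genCantorSubalgebra {F Z : Set C} (hF : F.Finite) (hne : F.Nonempty)
    (hZ : Z ≠ Set.univ) (hFZ : genCantorSubalgebra hC F ⊆ Z) :
    IsClone hC (genCantorSubalgebra hC F) :=
  ⟨isCantorSubalgebra_genCantorSubalgebra F, hne.mono (subset_genCantorSubalgebra F),
    fun h => hZ (Set.eq_univ_of_univ_subset (h ▸ hFZ)), F, hF, rfl⟩

variable (hC) in
def HasCloning : Prop :=
  ∀ Z, IsClone hC Z → ∃ Z₁ Z₂ : Set C, IsClone hC Z₁ ∧ IsClone hC Z₂ ∧ Z₁ ⊆ Z ∧ Z₂ ⊆ Z ∧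
    Z₁ ∩ Z₂ = ∅ ∧ genCantorSubalgebra hC (Z₁ ∪ Z₂) = Z

lemma HasCloning.of_equiv {e : C ≃ X} (he : IsCantorHom hC hX e) (h : HasCloning hX) :
    HasCloning hC := by
  intro Z hZ
  obtain ⟨Z₁, Z₂, h₁, h₂, hZ₁, hZ₂, hdisj, hgen⟩ := h _ (hZ.preimage he.symm)
  refine ⟨e ⁻¹' Z₁, e ⁻¹' Z₂, h₁.preimage he, h₂.preimage he, ?_, ?_, ?_, ?_⟩
  · simpa using Set.preimage_mono (f := e) hZ₁
  · simpa using Set.preimage_mono (f := e) hZ₂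
  · rw [← Set.preimage_inter, hdisj, Set.preimage_empty]
  · rw [← Set.preimage_union, genCantorSubalgebra_preimage he, hgen, e.preimage_symm_preimage]

end Cloning

/-- A `μ`-tree over the generator `c`: the leaf `[b₁, …, bₖ]` stands for
`child b₁ (… (child bₖ c))`, so a word is read from its right end. -/
inductive CantorTree : Type
  | leaf : List Bool → CantorTree
  | node : CantorTree → CantorTree → CantorTree

namespace CantorTree

def Siblings (a b : CantorTree) : Prop :=
  ∃ w, a = leaf (false :: w) ∧ b = leaf (true :: w)

def Reduced : CantorTree → Prop
  | leaf _ => True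
  | node l r => l.Reduced ∧ r.Reduced ∧ ¬ Siblings l r

def join : CantorTree → CantorTree → CantorTree
  | leaf (false :: u), leaf (true :: v) =>
      if u = v then leaf u else node (leaf (false :: u)) (leaf (true :: v))
  | a, b => node a b

def child : CantorTree → Bool → CantorTree
  | leaf w, b => leaf (b :: w)
  | node l r, b => bif b then r else l

def leaves : CantorTree → List (List Bool)
  | leaf w => [w]
  | node l r => l.leaves ++ r.leaves

lemma join_siblings (w : List Bool) : join (leaf (false :: w)) (leaf (true :: w)) = leaf w := by
  simp [join]

lemma join_of_not_siblings {a b : CantorTree} (h : ¬ Siblings a b) : join a b = node a b := by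
  unfold join
  split
  · rename_i u v
    rw [if_neg]
    rintro rfl
    exact h ⟨u, rfl, rfl⟩
  · rfl

lemma child_join (a b : CantorTree) (c : Bool) : (join a b).child c = bif c then b else a := by
  by_cases h : Siblings a b
  · obtain ⟨w, rfl, rfl⟩ := h
    rw [join_siblings]
    cases c <;> rfl
  · rw [join_of_not_siblings h]
    rfl

lemma join_child {t : CantorTree} (ht : t.Reduced) : join (t.child false) (t.child true) = t := by
  cases t with
  | leaf w => exact join_siblings w
  | node l r => exact join_of_not_siblings ht.2.2

lemma Reduced.join {a b : CantorTree} (ha : a.Reduced) (hb : b.Reduced) : (join a b).Reduced := by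
  by_cases h : Siblings a b
  · obtain ⟨w, rfl, rfl⟩ := h
    rw [join_siblings]
    trivial
  · rw [join_of_not_siblings h]
    exact ⟨ha, hb, h⟩

lemma Reduced.child {t : CantorTree} (ht : t.Reduced) (b : Bool) : (t.child b).Reduced := by
  cases t with
  | leaf w => trivial
  | node l r => cases b; exacts [ht.1, ht.2.1]

lemma leaves_ne_nil : ∀ t : CantorTree, t.leaves ≠ []
  | leaf _ => List.cons_ne_nil _ _
  | node l _ => fun h => leaves_ne_nil l (List.append_eq_nil_iff.1 h).1

lemma mem_leaves_join {a b : CantorTree} {w : List Bool} (h : w ∈ (join a b).leaves) :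
    w ∈ a.leaves ∨ w ∈ b.leaves ∨ (false :: w ∈ a.leaves ∧ true :: w ∈ b.leaves) := by
  by_cases hs : Siblings a b
  · obtain ⟨u, rfl, rfl⟩ := hs
    simp_all [join_siblings, leaves]
  · rw [join_of_not_siblings hs] at h
    simp only [leaves, List.mem_append] at h
    tauto

lemma mem_leaves_child {t : CantorTree} {b : Bool} {w : List Bool} (h : w ∈ (t.child b).leaves) :
    w ∈ t.leaves ∨ ∃ u ∈ t.leaves, w = b :: u := by
  cases t with
  | leaf u => exact Or.inr ⟨u, List.mem_singleton_self u, List.mem_singleton.1 h⟩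
  | node l r => cases b <;> simp_all [child, leaves]

section Eval

variable {X : Type} (hX : CantorStr X) (x : X)

def eval : CantorTree → X
  | leaf w => w.foldr hX.child x
  | node l r => hX.mu (l.eval, r.eval)

lemma eval_join (a b : CantorTree) : (join a b).eval hX x = hX.mu (a.eval hX x, b.eval hX x) := by
  by_cases h : Siblings a b
  · obtain ⟨w, rfl, rfl⟩ := h
    simp only [join_siblings, eval, List.foldr_cons]
    exact (hX.mu_child _).symm
  · rw [join_of_not_siblings h]
    rfl

end Eval

end CantorTree

def CantorNF : Type := {t : CantorTree // t.Reduced}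

namespace CantorNF

open CantorTree

def str : CantorStr CantorNF where
  mu :=
    { toFun := fun p => ⟨join p.1.1 p.2.1, p.1.2.join p.2.2⟩
      invFun := fun t => (⟨t.1.child false, t.2.child false⟩, ⟨t.1.child true, t.2.child true⟩)
      left_inv := fun _ =>
        Prod.ext (Subtype.ext (child_join _ _ _)) (Subtype.ext (child_join _ _ _))
      right_inv := fun t => Subtype.ext (join_child t.2) }

def leaf (w : List Bool) : CantorNF := ⟨.leaf w, trivial⟩

lemma val_child (b : Bool) (t : CantorNF) : (str.child b t).1 = t.1.child b := by
  cases b <;> rfl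

lemma child_leaf (b : Bool) (w : List Bool) : str.child b (leaf w) = leaf (b :: w) :=
  Subtype.ext (val_child b _)

lemma mu_leaf (w : List Bool) : str.mu (leaf (false :: w), leaf (true :: w)) = leaf w :=
  Subtype.ext (join_siblings w)

lemma leaves_mu {a b : CantorNF} (h : ¬ Siblings a.1 b.1) :
    (str.mu (a, b)).1.leaves = a.1.leaves ++ b.1.leaves :=
  congrArg CantorTree.leaves (join_of_not_siblings h)

@[elab_as_elim]
lemma induction {P : CantorNF → Prop} (hleaf : ∀ w, P (leaf w))
    (hmu : ∀ a b : CantorNF, ¬ Siblings a.1 b.1 → P a → P b → P (str.mu (a, b)))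
    (t : CantorNF) : P t := by
  obtain ⟨t, ht⟩ := t
  induction t with
  | leaf w => exact hleaf w
  | node l r ihl ihr =>
    have hnode : str.mu (⟨l, ht.1⟩, ⟨r, ht.2.1⟩) = ⟨node l r, ht⟩ :=
      Subtype.ext (join_of_not_siblings ht.2.2)
    exact hnode ▸ hmu _ _ ht.2.2 (ihl ht.1) (ihr ht.2.1)

section Free

variable {X : Type} {hX : CantorStr X}

lemma isCantorHom_eval (x : X) : IsCantorHom str hX fun t => t.1.eval hX x :=
  fun a b => eval_join hX x a.1 b.1

lemma hom_ext {f g : CantorNF → X} (hf : IsCantorHom str hX f) (hg : IsCantorHom str hX g)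
    (h : f (leaf []) = g (leaf [])) : f = g := by
  have hleaf : ∀ w, f (leaf w) = g (leaf w) := by
    intro w
    induction w with
    | nil => exact h
    | cons b w ih => rw [← child_leaf, hf.map_child, hg.map_child, ih]
  funext t
  induction t using induction with
  | hleaf w => exact hleaf w
  | hmu a b _ ha hb => rw [hf, hg, ha, hb]

end Free

theorem isFreeCantorOn : IsFreeCantorOn str ![leaf []] := by
  intro X hX x
  refine ⟨fun t => t.1.eval hX (x 0), ⟨isCantorHom_eval (x 0), fun i => ?_⟩,
    fun f hf => hom_ext hf.1 (isCantorHom_eval (x 0)) (hf.2 0)⟩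
  fin_cases i
  rfl

end CantorNF

lemma List.IsSuffix.exists_cons_isSuffix {α : Type*} {l₁ l₂ : List α} (h : l₁ <:+ l₂)
    (hne : l₁ ≠ l₂) : ∃ a, a :: l₁ <:+ l₂ := by
  obtain ⟨s, rfl⟩ := h
  rcases s.eq_nil_or_concat' with rfl | ⟨s, a, rfl⟩
  · exact absurd rfl hne
  · exact ⟨a, s, by simp⟩

structure IsWordClosed (S : Set (List Bool)) : Prop where
  cons_mem : ∀ ⦃w⦄, w ∈ S → ∀ b, b :: w ∈ S
  mem_of_cons_mem : ∀ ⦃w⦄, false :: w ∈ S → true :: w ∈ S → w ∈ S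

namespace IsWordClosed

variable {S : Set (List Bool)}

lemma append_mem (hS : IsWordClosed S) {w : List Bool} (hw : w ∈ S) (s : List Bool) :
    s ++ w ∈ S := by
  induction s with
  | nil => exact hw
  | cons b s ih => exact hS.cons_mem ih b

lemma subset_of_split (hS : IsWordClosed S) {W : Set (List Bool)} {v : List Bool}
    (hW : {u ∈ W | ¬ v <:+ u} ⊆ S) (h₀ : false :: v ∈ S) (h₁ : true :: v ∈ S) : W ⊆ S := by
  intro u hu
  by_cases hvu : v <:+ u
  · obtain ⟨s, rfl⟩ := hvu
    exact hS.append_mem (hS.mem_of_cons_mem h₀ h₁) s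
  · exact hW ⟨hu, hvu⟩

end IsWordClosed

lemma isWordClosed_setOf_isSuffix (u : List Bool) : IsWordClosed {w | u <:+ w} where
  cons_mem w hw b := hw.trans (List.suffix_cons b w)
  mem_of_cons_mem w h₀ h₁ := by
    rcases List.suffix_cons_iff.1 h₁ with rfl | h₁
    · rcases List.suffix_cons_iff.1 h₀ with h | h
      · simp at h
      · exact h
    · exact h₁

/-- The nodes of the binary tree of words lying neither in the subtree at `true :: v` nor on the
path from the root to `v`. -/
def avoiding (v : List Bool) : Set (List Bool) :=
  {x | ¬ true :: v <:+ x ∧ ¬ x <:+ v}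

lemma isWordClosed_avoiding (v : List Bool) : IsWordClosed (avoiding v) where
  cons_mem := by
    rintro x ⟨h₁, h₂⟩ b
    refine ⟨fun h => ?_, fun h => h₂ ((List.suffix_cons b x).trans h)⟩
    rcases List.suffix_cons_iff.1 h with h | h
    · obtain ⟨-, rfl⟩ := List.cons_eq_cons.1 h
      exact h₂ List.suffix_rfl
    · exact h₁ h
  mem_of_cons_mem := by
    rintro x ⟨hf₁, hf₂⟩ ⟨ht₁, ht₂⟩
    refine ⟨fun h => hf₁ (h.trans (List.suffix_cons _ _)), fun h => ?_⟩
    by_cases hxv : x = v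
    · subst hxv
      exact ht₁ List.suffix_rfl
    · obtain ⟨b, hb⟩ := h.exists_cons_isSuffix hxv
      cases b
      exacts [hf₂ hb, ht₂ hb]

lemma mem_avoiding_of_length_le {W : Set (List Bool)} {u v : List Bool}
    (hmin : ∀ u ∈ W, v.length ≤ u.length) (hu : u ∈ W) (hvu : ¬ v <:+ u) : u ∈ avoiding v := by
  refine ⟨fun h => hvu ((List.suffix_cons _ _).trans h), fun h => hvu ?_⟩
  rw [h.eq_of_length (le_antisymm h.length_le (hmin u hu))]

lemma false_cons_mem_avoiding (v : List Bool) : false :: v ∈ avoiding v :=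
  ⟨fun h => by simpa using h.eq_of_length rfl, fun h => by simpa using h.length_le⟩

namespace CantorNF

open CantorTree

def leavesIn (S : Set (List Bool)) : Set CantorNF :=
  {t | ∀ w ∈ t.1.leaves, w ∈ S}

lemma leaf_mem_leavesIn {S : Set (List Bool)} {w : List Bool} : leaf w ∈ leavesIn S ↔ w ∈ S := by
  show (∀ x ∈ [w], x ∈ S) ↔ w ∈ S
  simp

lemma isCantorSubalgebra_leavesIn {S : Set (List Bool)} (hS : IsWordClosed S) :
    IsCantorSubalgebra str (leavesIn S) := by
  refine .of_child (fun a ha b hb w hw => ?_) (fun t ht c w hw => ?_)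
  · rcases mem_leaves_join hw with h | h | ⟨h₀, h₁⟩
    exacts [ha w h, hb w h, hS.mem_of_cons_mem (ha _ h₀) (hb _ h₁)]
  · rw [val_child] at hw
    rcases mem_leaves_child hw with h | ⟨u, hu, rfl⟩
    exacts [ht w h, hS.cons_mem (ht u hu) c]

lemma leavesIn_inter_leavesIn {S S' : Set (List Bool)} (h : Disjoint S S') :
    leavesIn S ∩ leavesIn S' = ∅ :=
  Set.eq_empty_of_forall_notMem fun t ⟨hS, hS'⟩ => by
    obtain ⟨w, hw⟩ := List.exists_mem_of_ne_nil _ (leaves_ne_nil t.1)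
    exact Set.disjoint_left.1 h (hS w hw) (hS' w hw)

section Subalgebra

variable {A : Set CantorNF}

lemma mem_iff_forall_leaf_mem (hA : IsCantorSubalgebra str A) (t : CantorNF) :
    t ∈ A ↔ ∀ w ∈ t.1.leaves, leaf w ∈ A := by
  induction t using induction with
  | hleaf w => simp [leaf, leaves]
  | hmu a b hab ha hb => rw [hA.mu_mem_iff, ha, hb, leaves_mu hab, List.forall_mem_append]

lemma isWordClosed_setOf_leaf_mem (hA : IsCantorSubalgebra str A) :
    IsWordClosed {w | leaf w ∈ A} where
  cons_mem w hw b := by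
    show leaf (b :: w) ∈ A
    rw [← child_leaf]
    exact hA.child_mem b hw
  mem_of_cons_mem w h₀ h₁ := by
    show leaf w ∈ A
    rw [← mu_leaf]
    exact hA.mu_mem h₀ h₁

lemma genCantorSubalgebra_leaf_subset_iff (hA : IsCantorSubalgebra str A) {W : Set (List Bool)} :
    genCantorSubalgebra str (leaf '' W) ⊆ A ↔ W ⊆ {w | leaf w ∈ A} :=
  ⟨fun h => Set.image_subset_iff.1 ((subset_genCantorSubalgebra _).trans h),
    fun h => genCantorSubalgebra_subset hA (Set.image_subset_iff.2 h)⟩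

end Subalgebra

def leafWords (F : Set CantorNF) : Set (List Bool) :=
  ⋃ t ∈ F, {w | w ∈ t.1.leaves}

lemma leafWords_finite {F : Set CantorNF} (hF : F.Finite) : (leafWords F).Finite :=
  hF.biUnion fun _ _ => List.finite_toSet _

lemma leafWords_nonempty {F : Set CantorNF} (hF : F.Nonempty) : (leafWords F).Nonempty := by
  obtain ⟨t, ht⟩ := hF
  obtain ⟨w, hw⟩ := List.exists_mem_of_ne_nil _ (leaves_ne_nil t.1)
  exact ⟨w, Set.mem_biUnion ht hw⟩

lemma genCantorSubalgebra_subset_iff {A : Set CantorNF} (hA : IsCantorSubalgebra str A)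
    {F : Set CantorNF} : genCantorSubalgebra str F ⊆ A ↔ leafWords F ⊆ {w | leaf w ∈ A} := by
  refine ⟨fun h => Set.iUnion₂_subset fun t ht =>
    (mem_iff_forall_leaf_mem hA t).1 (h (subset_genCantorSubalgebra F ht)), fun h => ?_⟩
  exact genCantorSubalgebra_subset hA fun t ht =>
    (mem_iff_forall_leaf_mem hA t).2 fun w hw => h (Set.mem_biUnion ht hw)

lemma genCantorSubalgebra_leaf_inter_eq_empty {W : Set (List Bool)} {v : List Bool}
    (hmin : ∀ u ∈ W, v.length ≤ u.length) :
    genCantorSubalgebra str (leaf '' ({u ∈ W | ¬ v <:+ u} ∪ {false :: v})) ∩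
      genCantorSubalgebra str (leaf '' {true :: v}) = ∅ := by
  have h₁ := genCantorSubalgebra_subset (isCantorSubalgebra_leavesIn (isWordClosed_avoiding v))
    (A := leaf '' ({u ∈ W | ¬ v <:+ u} ∪ {false :: v})) <| by
      rintro _ ⟨u, ⟨huW, hvu⟩ | rfl, rfl⟩
      exacts [leaf_mem_leavesIn.2 (mem_avoiding_of_length_le hmin huW hvu),
        leaf_mem_leavesIn.2 (false_cons_mem_avoiding v)]
  have h₂ := genCantorSubalgebra_subset
    (isCantorSubalgebra_leavesIn (isWordClosed_setOf_isSuffix (true :: v)))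
    (A := leaf '' {true :: v}) <| by
      rintro _ ⟨u, rfl, rfl⟩
      exact leaf_mem_leavesIn.2 List.suffix_rfl
  exact Set.subset_empty_iff.1 <| (Set.inter_subset_inter h₁ h₂).trans
    (leavesIn_inter_leavesIn (Set.disjoint_left.2 fun _ hw hw' => hw.1 hw')).le

theorem hasCloning : HasCloning str := by
  intro Z hZ
  obtain ⟨F, hF, rfl⟩ := hZ.2.2.2
  have hG := isCantorSubalgebra_genCantorSubalgebra (hC := str)
  have hFne : F.Nonempty := Set.nonempty_iff_ne_empty.2 fun h =>
    hZ.2.1.ne_empty (by rw [h, genCantorSubalgebra_empty])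
  have hWfin := leafWords_finite hF
  obtain ⟨v, hvW, hvmin⟩ := Set.exists_min_image _ List.length hWfin (leafWords_nonempty hFne)
  set W₁ := {u ∈ leafWords F | ¬ v <:+ u} ∪ {false :: v}
  set W₂ : Set (List Bool) := {true :: v}
  have hWZ := (genCantorSubalgebra_subset_iff hZ.1).1 le_rfl
  have hvZ := (isWordClosed_setOf_leaf_mem hZ.1).cons_mem (hWZ hvW)
  have hZ₁ : genCantorSubalgebra str (leaf '' W₁) ⊆ genCantorSubalgebra str F :=
    (genCantorSubalgebra_leaf_subset_iff hZ.1).2 <|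
      Set.union_subset ((Set.sep_subset _ _).trans hWZ) (Set.singleton_subset_iff.2 (hvZ false))
  have hZ₂ : genCantorSubalgebra str (leaf '' W₂) ⊆ genCantorSubalgebra str F :=
    (genCantorSubalgebra_leaf_subset_iff hZ.1).2 (Set.singleton_subset_iff.2 (hvZ true))
  refine ⟨_, _, isClone_genCantorSubalgebra (((hWfin.sep _).union (Set.finite_singleton _)).image _)
      (by simp) hZ.2.2.1 hZ₁, isClone_genCantorSubalgebra ((Set.finite_singleton _).image _)
      (by simp) hZ.2.2.1 hZ₂, hZ₁, hZ₂, genCantorSubalgebra_leaf_inter_eq_empty hvmin, ?_⟩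
  set G := genCantorSubalgebra str
    (genCantorSubalgebra str (leaf '' W₁) ∪ genCantorSubalgebra str (leaf '' W₂))
  have hW₁ : W₁ ⊆ {w | leaf w ∈ G} := (genCantorSubalgebra_leaf_subset_iff (hG _)).1
    (Set.subset_union_left.trans (subset_genCantorSubalgebra _))
  have hW₂ : W₂ ⊆ {w | leaf w ∈ G} := (genCantorSubalgebra_leaf_subset_iff (hG _)).1
    (Set.subset_union_right.trans (subset_genCantorSubalgebra _))
  refine (genCantorSubalgebra_subset hZ.1 (Set.union_subset hZ₁ hZ₂)).antisymm
    ((genCantorSubalgebra_subset_iff (hG _)).2 ?_)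
  -- `leaf v = μ (leaf (false :: v), leaf (true :: v))` lies in `G`, hence so do its descendants
  exact (isWordClosed_setOf_leaf_mem (hG _)).subset_of_split (fun u hu => hW₁ (Or.inl hu))
    (hW₁ (Or.inr rfl)) (hW₂ rfl)

end CantorNF

/-- **Cloning**: every clone `Z` of a Cantor algebra free on one generator contains two
disjoint clones `Z₁, Z₂` such that `Z` is the subalgebra generated by `Z₁ ∪ Z₂`. -/
theorem cloning {C : Type} (hC : CantorStr C) (c : C) (hfree : IsFreeCantorOn hC ![c])
    (Z : Set C) (hZ : IsClone hC Z) :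
    ∃ Z₁ Z₂ : Set C, IsClone hC Z₁ ∧ IsClone hC Z₂ ∧ Z₁ ⊆ Z ∧ Z₂ ⊆ Z ∧
      Z₁ ∩ Z₂ = ∅ ∧ genCantorSubalgebra hC (Z₁ ∪ Z₂) = Z := by
  obtain ⟨e, he⟩ := hfree.exists_equiv CantorNF.isFreeCantorOn
  exact CantorNF.hasCloning.of_equiv he Z hZ
end
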